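/- arXiv:1101.0138 — 3 statements merged into one kernel-verified Lean document; each statement's English description precedes it below -/
import Mathlib

section
/- Let (α_n)_{n∈ℕ} be nonnegative weights. There exists a constant C > 0 such that for every q ∈ [0,1], every real-valued v ∈ ℓ²(ℕ), and every ω ∈ ℓ²(ℕ), I_q(v, ω̂) ≤ C · I_q(v, ω), where I_q(v, ω) = ‖v − ω‖²_{ℓ²} + ∑_n α_n |ω_n|^q (with 0⁰ = 0 when q = 0) and ω̂ is the sequence with ω̂_n = ϱ^{(q)}_{h,s}(v_n, α_n |v_n|^{q−1}) for v_n ≠ 0 and ω̂_n = 0 for v_n = 0, with ϱ^{(q)}_{h,s}(x, β) = (x − sign(x)·q·c_q·β)·1_{|x| > c_q β} and c_q = 2^{q−2}(2−q)^{2−q}/(1−q)^{1−q} (c_1 = 1/2). -/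
open scoped ENNReal

noncomputable section

/-- The constant `c_q = 2^(q−2)·(2−q)^(2−q)/(1−q)^(1−q)`; with `rpow` conventions `cq 1 = 1/2`,
the continuous extension. -/
def cq (q : ℝ) : ℝ := 2 ^ (q - 2) * (2 - q) ^ (2 - q) / (1 - q) ^ (1 - q)

/-- The interpolating rule `ϱ^{(q)}_{h,s}(x, β) = (x − sign(x)·q·c_q·β)·1_{|x| > c_q β}`. -/
def rhoHS (q x β : ℝ) : ℝ :=
  if cq q * β < |x| then x - Real.sign x * (q * cq q * β) else 0

/-- The weighted `ℓ_q` penalty `∑_n α_n |w_n|^q`, valued in `ℝ≥0∞`, with the convention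
`0^0 = 0` (so that for `q = 0` it counts nonzero entries weighted by `α_n`). -/
def wpen (α : ℕ → ℝ) (q : ℝ) (w : ℕ → ℝ) : ℝ≥0∞ :=
  ∑' n, ENNReal.ofReal (α n * (if w n = 0 then 0 else |w n| ^ q))

/-- The decoupled functional `I_q(v, ω) = ‖v − ω‖²_{ℓ²} + ∑_n α_n |ω_n|^q`. -/
def Ifun (α : ℕ → ℝ) (q : ℝ) (v ω : lp (fun _ : ℕ => ℝ) 2) : ℝ≥0∞ :=
  ENNReal.ofReal (‖v - ω‖ ^ 2) + wpen α q (fun n => (ω : ∀ _ : ℕ, ℝ) n)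

lemma denom_pos {q : ℝ} (hq1 : q ≤ 1) : 0 < (1 - q : ℝ) ^ (1 - q) := by
  rcases eq_or_lt_of_le hq1 with h | h
  · rw [← h]; norm_num
  · exact Real.rpow_pos_of_pos (by linarith) _

lemma denom_le_one {q : ℝ} (hq0 : 0 ≤ q) (hq1 : q ≤ 1) : (1 - q : ℝ) ^ (1 - q) ≤ 1 :=
  Real.rpow_le_one (by linarith) (by linarith) (by linarith)

lemma denom_ge {q : ℝ} (hq0 : 0 ≤ q) (hq1 : q ≤ 1) : (1/4 : ℝ) ≤ (1 - q : ℝ) ^ (1 - q) := by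
  set t := 1 - q with ht
  have ht0 : 0 ≤ t := by linarith
  have ht1 : t ≤ 1 := by linarith
  rcases eq_or_lt_of_le ht0 with h | h
  · rw [← h]; norm_num
  · rw [Real.rpow_def_of_pos h]
    have hlog : Real.log (1/t) ≤ 1/t - 1 := Real.log_le_sub_one_of_pos (by positivity)
    have h2 : -Real.log t ≤ 1/t - 1 := by
      rwa [Real.log_div one_ne_zero (ne_of_gt h), Real.log_one, zero_sub] at hlog
    have h3 : (-1 : ℝ) ≤ Real.log t * t := by
      nlinarith [mul_le_mul_of_nonneg_left h2 (le_of_lt h), mul_one_div_cancel (ne_of_gt h)]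
    calc (1/4 : ℝ) ≤ Real.exp (-1) := by
            rw [Real.exp_neg, one_div]
            refine inv_anti₀ (Real.exp_pos 1) ?_
            exact le_of_lt (lt_trans Real.exp_one_lt_d9 (by norm_num))
      _ ≤ Real.exp (Real.log t * t) := Real.exp_le_exp.2 h3

lemma two_rpow_lb {q : ℝ} (hq0 : 0 ≤ q) : (1/4 : ℝ) ≤ (2:ℝ) ^ (q - 2) := by
  have : (2:ℝ) ^ (-2 : ℝ) ≤ (2:ℝ) ^ (q - 2) :=
    Real.rpow_le_rpow_of_exponent_le (by norm_num) (by linarith)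
  have h2 : (2:ℝ) ^ (-2 : ℝ) = 1/4 := by
    rw [show (-2:ℝ) = ((-2 : ℤ) : ℝ) by norm_num, Real.rpow_intCast]; norm_num
  rw [← h2]; exact this

lemma two_rpow_ub {q : ℝ} (hq1 : q ≤ 1) : (2:ℝ) ^ (q - 2) ≤ 1/2 := by
  have : (2:ℝ) ^ (q - 2) ≤ (2:ℝ) ^ (-1 : ℝ) :=
    Real.rpow_le_rpow_of_exponent_le (by norm_num) (by linarith)
  have h2 : (2:ℝ) ^ (-1 : ℝ) = 1/2 := by
    rw [show (-1:ℝ) = ((-1 : ℤ) : ℝ) by norm_num, Real.rpow_intCast]; norm_num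
  rw [← h2]; exact this

lemma mid_lb {q : ℝ} (hq1 : q ≤ 1) : (1:ℝ) ≤ (2 - q : ℝ) ^ (2 - q) := by
  have : (2 - q : ℝ) ^ (0:ℝ) ≤ (2 - q : ℝ) ^ (2 - q) :=
    Real.rpow_le_rpow_of_exponent_le (by linarith) (by linarith)
  simpa using this

lemma mid_ub {q : ℝ} (hq0 : 0 ≤ q) (hq1 : q ≤ 1) : (2 - q : ℝ) ^ (2 - q) ≤ 4 := by
  have h1 : (2 - q : ℝ) ^ (2 - q) ≤ (2:ℝ) ^ (2 - q) :=
    Real.rpow_le_rpow (by linarith) (by linarith) (by linarith)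
  have h2 : (2:ℝ) ^ (2 - q : ℝ) ≤ (2:ℝ) ^ (2 : ℝ) :=
    Real.rpow_le_rpow_of_exponent_le (by norm_num) (by linarith)
  have h3 : (2:ℝ) ^ (2 : ℝ) = 4 := by
    rw [show (2:ℝ) = ((2 : ℕ) : ℝ) by norm_num, Real.rpow_natCast]; norm_num
  rw [h3] at h2; linarith

lemma cq_lb {q : ℝ} (hq0 : 0 ≤ q) (hq1 : q ≤ 1) : (1/4 : ℝ) ≤ cq q := by
  rw [cq, le_div_iff₀ (denom_pos hq1)]
  nlinarith [two_rpow_lb hq0, mid_lb hq1, denom_le_one hq0 hq1, denom_pos hq1,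
    mul_le_mul (two_rpow_lb hq0) (mid_lb hq1) (by norm_num) (by positivity)]

lemma cq_ub {q : ℝ} (hq0 : 0 ≤ q) (hq1 : q ≤ 1) : cq q ≤ 8 := by
  rw [cq, div_le_iff₀ (denom_pos hq1)]
  nlinarith [two_rpow_ub hq1, mid_ub hq0 hq1, denom_ge hq0 hq1, two_rpow_lb hq0, mid_lb hq1]

lemma cq_pos {q : ℝ} (hq0 : 0 ≤ q) (hq1 : q ≤ 1) : 0 < cq q := lt_of_lt_of_le (by norm_num) (cq_lb hq0 hq1)

lemma pen_nonneg (q y : ℝ) : 0 ≤ (if y = 0 then 0 else |y| ^ q) := by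
  split
  · exact le_refl 0
  · positivity

set_option maxHeartbeats 1600000 in
lemma key_pointwise (q : ℝ) (hq0 : 0 ≤ q) (hq1 : q ≤ 1) (a : ℝ) (ha : 0 ≤ a) (x w wh : ℝ)
    (hwh : wh = if x = 0 then 0 else rhoHS q x (a * |x| ^ (q - 1))) :
    (x - wh) ^ 2 + a * (if wh = 0 then 0 else |wh| ^ q)
      ≤ 144 * ((x - w) ^ 2 + a * (if w = 0 then 0 else |w| ^ q)) := by
  have hpw := pen_nonneg q w
  by_cases hx : x = 0
  · have hwh0 : wh = 0 := by rw [hwh, if_pos hx]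
    rw [hwh0, if_pos rfl, mul_zero, add_zero, hx, sub_zero]
    have h0 : ((0:ℝ)) ^ 2 = 0 := by norm_num
    rw [h0]
    linarith [sq_nonneg ((0:ℝ) - w), mul_nonneg ha hpw]
  · set β := a * |x| ^ (q - 1) with hβ
    have hβ0 : 0 ≤ β := mul_nonneg ha (Real.rpow_nonneg (abs_nonneg x) _)
    have hx0 : 0 < |x| := abs_pos.2 hx
    have hc4 : (1/4 : ℝ) ≤ cq q := cq_lb hq0 hq1
    have hc8 : cq q ≤ 8 := cq_ub hq0 hq1
    have hc0 : 0 < cq q := cq_pos hq0 hq1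
    have hax : a * |x| ^ q = β * |x| := by
      have h1 : |x| ^ (q - 1) * |x| = |x| ^ q := by
        nth_rewrite 2 [← Real.rpow_one |x|]
        rw [← Real.rpow_add hx0]
        ring_nf
      rw [hβ, mul_assoc, h1]
    have hβx0 : 0 ≤ β * |x| := mul_nonneg hβ0 hx0.le
    have hsqx : |x| * |x| = x ^ 2 := by rw [← sq_abs x]; ring
    have hc8' : cq q * (β * |x|) ≤ 8 * (β * |x|) := mul_le_mul_of_nonneg_right hc8 hβx0
    have hc4' : (1/4) * (β * |x|) ≤ cq q * (β * |x|) := mul_le_mul_of_nonneg_right hc4 hβx0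
    -- lower bound for the penalty of w when |w| is large
    have hpenw : |x| ≤ 2 * |w| → β * |x| / 2 ≤ a * (if w = 0 then 0 else |w| ^ q) := by
      intro hw2
      have hw0 : w ≠ 0 := by
        intro h; rw [h, abs_zero] at hw2; linarith
      rw [if_neg hw0]
      have h1 : (|x| / 2) ^ q ≤ |w| ^ q :=
        Real.rpow_le_rpow (by positivity) (by linarith) hq0
      have h2 : (|x| / 2 : ℝ) ^ q = |x| ^ q / 2 ^ q :=
        Real.div_rpow (abs_nonneg x) (by norm_num : (0:ℝ) ≤ 2) q
      have h3 : (2:ℝ) ^ q ≤ 2 := by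
        have := Real.rpow_le_rpow_of_exponent_le (by norm_num : (1:ℝ) ≤ 2) hq1
        rwa [Real.rpow_one] at this
      have h4 : (0:ℝ) < 2 ^ q := Real.rpow_pos_of_pos (by norm_num) q
      have h5 : |x| ^ q / 2 ≤ |x| ^ q / 2 ^ q :=
        div_le_div_of_nonneg_left (Real.rpow_nonneg (abs_nonneg x) q) h4 h3
      have h6 : |x| ^ q / 2 ≤ |w| ^ q := by linarith
      have h7 := mul_le_mul_of_nonneg_left h6 ha
      have h8 : a * (|x| ^ q / 2) = β * |x| / 2 := by rw [← hax]; ring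
      linarith
    rw [rhoHS, if_neg hx] at hwh
    by_cases hth : cq q * β < |x|
    · rw [if_pos hth] at hwh
      set t := q * cq q * β with htdef
      have ht0 : 0 ≤ t := mul_nonneg (mul_nonneg hq0 hc0.le) hβ0
      have htle : t ≤ cq q * β := by
        have := mul_nonneg (mul_nonneg (by linarith : (0:ℝ) ≤ 1 - q) hc0.le) hβ0
        rw [htdef]; linarith
      have htx : t < |x| := lt_of_le_of_lt htle hth
      have habs : |wh| = |x| - t := by
        rcases lt_trichotomy x 0 with hneg | hzero | hpos
        · have hs : x - Real.sign x * t = x + t := by rw [Real.sign_of_neg hneg]; ring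
          rw [hwh, hs, abs_of_neg (by rw [abs_of_neg hneg] at htx; linarith), abs_of_neg hneg]
          ring
        · exact absurd hzero hx
        · have hs : x - Real.sign x * t = x - t := by rw [Real.sign_of_pos hpos]; ring
          rw [hwh, hs, abs_of_pos (by rw [abs_of_pos hpos] at htx; linarith), abs_of_pos hpos]
      have hwh0 : wh ≠ 0 := by
        intro h; rw [h, abs_zero] at habs; linarith
      have hxw : (x - wh) ^ 2 = t ^ 2 := by
        rcases lt_trichotomy x 0 with hneg | hzero | hpos
        · rw [hwh, Real.sign_of_neg hneg]; ring
        · exact absurd hzero hx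
        · rw [hwh, Real.sign_of_pos hpos]; ring
      have h1 : t ^ 2 ≤ 8 * (β * |x|) := by
        have ha1 : t ^ 2 ≤ (cq q * β) ^ 2 := pow_le_pow_left₀ ht0 htle 2
        have ha2 : (cq q * β) * (cq q * β) ≤ (cq q * β) * |x| :=
          mul_le_mul_of_nonneg_left hth.le (mul_nonneg hc0.le hβ0)
        nlinarith [hc8', ha1, ha2]
      have h2 : a * |wh| ^ q ≤ β * |x| := by
        rw [← hax]
        exact mul_le_mul_of_nonneg_left
          (Real.rpow_le_rpow (abs_nonneg _) (by rw [habs]; linarith) hq0) ha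
      rw [if_neg hwh0, hxw]
      by_cases hw2 : |x| ≤ 2 * |w|
      · have hpw2 := hpenw hw2
        linarith [sq_nonneg (x - w)]
      · push_neg at hw2
        have hsub : |x| - |w| ≤ |x - w| := abs_sub_abs_le_abs_sub x w
        have hsq : (|x| / 2) ^ 2 ≤ (x - w) ^ 2 := by
          rw [← sq_abs (x - w)]
          apply pow_le_pow_left₀ (by positivity)
          linarith
        have e2 : (|x| / 2) ^ 2 = x ^ 2 / 4 := by rw [div_pow, sq_abs]; norm_num
        have hxx : cq q * β * |x| ≤ x ^ 2 := by
          have h := mul_le_mul_of_nonneg_right hth.le hx0.le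
          rw [hsqx] at h; exact h
        have hx24 : x ^ 2 / 4 ≤ (x - w) ^ 2 := by rw [← e2]; exact hsq
        nlinarith [mul_nonneg ha hpw, hc4', hxx, hx24, h1, h2]
    · rw [if_neg hth] at hwh
      push_neg at hth
      have hLHS : (x - wh) ^ 2 + a * (if wh = 0 then 0 else |wh| ^ q) = x ^ 2 := by
        rw [hwh]; norm_num
      rw [hLHS]
      have hkey : x ^ 2 ≤ 8 * (β * |x|) := by
        have h1 : |x| * |x| ≤ (cq q * β) * |x| := mul_le_mul_of_nonneg_right hth hx0.le
        rw [hsqx] at h1; nlinarith [hc8', h1]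
      by_cases hw2 : |x| ≤ 2 * |w|
      · have hpw2 := hpenw hw2
        linarith [sq_nonneg (x - w), hkey]
      · push_neg at hw2
        have hsub : |x| - |w| ≤ |x - w| := abs_sub_abs_le_abs_sub x w
        have hsq : (|x| / 2) ^ 2 ≤ (x - w) ^ 2 := by
          rw [← sq_abs (x - w)]
          apply pow_le_pow_left₀ (by positivity)
          linarith
        have e2 : (|x| / 2) ^ 2 = x ^ 2 / 4 := by rw [div_pow, sq_abs]; norm_num
        have hx24 : x ^ 2 / 4 ≤ (x - w) ^ 2 := by rw [← e2]; exact hsq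
        linarith [mul_nonneg ha hpw, hx24, sq_nonneg x]

lemma abs_wh_le (q : ℝ) (hq0 : 0 ≤ q) (hq1 : q ≤ 1) (a : ℝ) (ha : 0 ≤ a) (x wh : ℝ)
    (hwh : wh = if x = 0 then 0 else rhoHS q x (a * |x| ^ (q - 1))) : |wh| ≤ |x| := by
  by_cases hx : x = 0
  · rw [hwh, if_pos hx, abs_zero]; exact abs_nonneg x
  · rw [hwh, if_neg hx, rhoHS]
    set β := a * |x| ^ (q - 1) with hβ
    have hβ0 : 0 ≤ β := mul_nonneg ha (Real.rpow_nonneg (abs_nonneg x) _)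
    have hc0 : 0 < cq q := cq_pos hq0 hq1
    by_cases hth : cq q * β < |x|
    · rw [if_pos hth]
      set t := q * cq q * β with htdef
      have ht0 : 0 ≤ t := mul_nonneg (mul_nonneg hq0 hc0.le) hβ0
      have htle : t ≤ cq q * β := by
        have := mul_nonneg (mul_nonneg (by linarith : (0:ℝ) ≤ 1 - q) hc0.le) hβ0
        rw [htdef]; linarith
      have htx : t < |x| := lt_of_le_of_lt htle hth
      rcases lt_trichotomy x 0 with hneg | hzero | hpos
      · have hs : x - Real.sign x * t = x + t := by rw [Real.sign_of_neg hneg]; ring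
        rw [hs, abs_of_neg (by rw [abs_of_neg hneg] at htx; linarith), abs_of_neg hneg]
        linarith
      · exact absurd hzero hx
      · have hs : x - Real.sign x * t = x - t := by rw [Real.sign_of_pos hpos]; ring
        rw [hs, abs_of_pos (by rw [abs_of_pos hpos] at htx; linarith), abs_of_pos hpos]
        linarith
    · rw [if_neg hth, abs_zero]; exact abs_nonneg x

lemma memℓp_of_abs_le (v : lp (fun _ : ℕ => ℝ) 2) (f : ℕ → ℝ)
    (hf : ∀ n, |f n| ≤ |(v : ∀ _ : ℕ, ℝ) n|) : Memℓp f 2 := by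
  apply memℓp_gen
  have hp : 0 < (2 : ℝ≥0∞).toReal := by norm_num
  have hs : Summable fun n => ‖(v : ∀ _ : ℕ, ℝ) n‖ ^ (2 : ℝ≥0∞).toReal :=
    (lp.memℓp v).summable hp
  refine Summable.of_nonneg_of_le (fun n => ?_) (fun n => ?_) hs
  · exact Real.rpow_nonneg (norm_nonneg _) _
  · exact Real.rpow_le_rpow (norm_nonneg _)
      (by simpa [Real.norm_eq_abs] using hf n) (by norm_num)

lemma ofReal_norm_sq (u : lp (fun _ : ℕ => ℝ) 2) :
    ENNReal.ofReal (‖u‖ ^ 2) = ∑' n, ENNReal.ofReal (((u : ∀ _ : ℕ, ℝ) n) ^ 2) := by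
  have hp : 0 < (2 : ℝ≥0∞).toReal := by norm_num
  have h := lp.norm_rpow_eq_tsum hp u
  have ht : (2 : ℝ≥0∞).toReal = (2 : ℝ) := by norm_num
  rw [ht] at h
  have hterm : ∀ n, ‖(u : ∀ _ : ℕ, ℝ) n‖ ^ (2:ℝ) = ((u : ∀ _ : ℕ, ℝ) n) ^ 2 := by
    intro n
    rw [show ((2:ℝ)) = ((2:ℕ):ℝ) by norm_num, Real.rpow_natCast, Real.norm_eq_abs, sq_abs]
  have h2 : ‖u‖ ^ (2:ℕ) = ∑' n, ((u : ∀ _ : ℕ, ℝ) n) ^ 2 := by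
    have hcast : ‖u‖ ^ (2:ℝ) = ‖u‖ ^ (2:ℕ) := by
      rw [← Real.rpow_natCast ‖u‖ 2]; norm_num
    rw [← hcast, h]
    exact tsum_congr hterm
  have hsum : Summable fun n => ((u : ∀ _ : ℕ, ℝ) n) ^ 2 := by
    have := (lp.memℓp u).summable hp
    rw [ht] at this
    exact this.congr hterm
  rw [h2, ENNReal.ofReal_tsum_of_nonneg (fun n => sq_nonneg _) hsum]

lemma Ifun_eq (α : ℕ → ℝ) (hα : ∀ n, 0 ≤ α n) (q : ℝ) (v ω : lp (fun _ : ℕ => ℝ) 2) :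
    Ifun α q v ω = ∑' n, ENNReal.ofReal
      (((v : ∀ _ : ℕ, ℝ) n - (ω : ∀ _ : ℕ, ℝ) n) ^ 2 +
        α n * (if (ω : ∀ _ : ℕ, ℝ) n = 0 then 0 else |(ω : ∀ _ : ℕ, ℝ) n| ^ q)) := by
  rw [Ifun, wpen, ofReal_norm_sq, ← ENNReal.tsum_add]
  refine tsum_congr fun n => ?_
  have hc : ((v - ω : lp (fun _ : ℕ => ℝ) 2) : ∀ _ : ℕ, ℝ) n
      = (v : ∀ _ : ℕ, ℝ) n - (ω : ∀ _ : ℕ, ℝ) n := by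
    rw [lp.coeFn_sub]; rfl
  rw [hc, ← ENNReal.ofReal_add (sq_nonneg _) (mul_nonneg (hα n) (pen_nonneg q _))]

theorem rhoHS_minimizes_decoupled_functional_uniformly
    (α : ℕ → ℝ) (hα : ∀ n, 0 ≤ α n) :
    ∃ C > (0 : ℝ), ∀ q ∈ Set.Icc (0 : ℝ) 1, ∀ v : lp (fun _ : ℕ => ℝ) 2,
      ∃ what : lp (fun _ : ℕ => ℝ) 2,
        -- ω̂_n = ϱ^{(q)}_{h,s}(v_n, α_n |v_n|^(q−1)) for v_n ≠ 0, and ω̂_n = 0 for v_n = 0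
        (∀ n : ℕ, (what : ∀ _ : ℕ, ℝ) n =
          if (v : ∀ _ : ℕ, ℝ) n = 0 then 0
          else rhoHS q ((v : ∀ _ : ℕ, ℝ) n) (α n * |(v : ∀ _ : ℕ, ℝ) n| ^ (q - 1))) ∧
        ∀ ω : lp (fun _ : ℕ => ℝ) 2,
          Ifun α q v what ≤ ENNReal.ofReal C * Ifun α q v ω := by
  
  refine ⟨144, by norm_num, ?_⟩
  rintro q ⟨hq0, hq1⟩ v
  set f : ℕ → ℝ := fun n =>
    if (v : ∀ _ : ℕ, ℝ) n = 0 then 0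
    else rhoHS q ((v : ∀ _ : ℕ, ℝ) n) (α n * |(v : ∀ _ : ℕ, ℝ) n| ^ (q - 1)) with hf
  have hmem : Memℓp f 2 :=
    memℓp_of_abs_le v f fun n => abs_wh_le q hq0 hq1 (α n) (hα n) _ _ rfl
  refine ⟨⟨f, hmem⟩, fun n => rfl, fun ω => ?_⟩
  rw [Ifun_eq α hα q v, Ifun_eq α hα q v]
  calc (∑' n, ENNReal.ofReal
        (((v : ∀ _ : ℕ, ℝ) n - ((⟨f, hmem⟩ : lp (fun _ : ℕ => ℝ) 2) : ∀ _ : ℕ, ℝ) n) ^ 2 +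
          α n * (if ((⟨f, hmem⟩ : lp (fun _ : ℕ => ℝ) 2) : ∀ _ : ℕ, ℝ) n = 0 then 0
            else |((⟨f, hmem⟩ : lp (fun _ : ℕ => ℝ) 2) : ∀ _ : ℕ, ℝ) n| ^ q)))
      ≤ ∑' n, ENNReal.ofReal (144 *
          (((v : ∀ _ : ℕ, ℝ) n - (ω : ∀ _ : ℕ, ℝ) n) ^ 2 +
            α n * (if (ω : ∀ _ : ℕ, ℝ) n = 0 then 0 else |(ω : ∀ _ : ℕ, ℝ) n| ^ q))) := by
        refine ENNReal.tsum_le_tsum fun n => ENNReal.ofReal_le_ofReal ?_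
        exact key_pointwise q hq0 hq1 (α n) (hα n) _ _ _ rfl
    _ = ENNReal.ofReal 144 * ∑' n, ENNReal.ofReal
          (((v : ∀ _ : ℕ, ℝ) n - (ω : ∀ _ : ℕ, ℝ) n) ^ 2 +
            α n * (if (ω : ∀ _ : ℕ, ℝ) n = 0 then 0 else |(ω : ∀ _ : ℕ, ℝ) n| ^ q)) := by
        rw [← ENNReal.tsum_mul_left]
        exact tsum_congr fun n => ENNReal.ofReal_mul (by norm_num)
end
end

section
/- The function q ↦ c_q = 2^{q−2}·(2−q)^{2−q}/(1−q)^{1−q} defined on [0,1) is monotonically decreasing, satisfies c_0 = 1, and converges to 1/2 as q → 1⁻ (so its continuous extension to [0,1] has c_1 = 1/2). -/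
open Filter

noncomputable section

private def fq (q : ℝ) : ℝ :=
  (q - 2) * Real.log 2 + (2 - q) * Real.log (2 - q) - (1 - q) * Real.log (1 - q)

private lemma fq_continuous : Continuous fq := by
  unfold fq
  have h := Real.continuous_mul_log
  fun_prop

private lemma cq_eq_exp {q : ℝ} (hq : q < 1) : cq q = Real.exp (fq q) := by
  have h1 : (0:ℝ) < 1 - q := by linarith
  have h2 : (0:ℝ) < 2 - q := by linarith
  unfold cq fq
  rw [Real.rpow_def_of_pos (by norm_num), Real.rpow_def_of_pos h2,
    Real.rpow_def_of_pos h1, ← Real.exp_add, ← Real.exp_sub]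
  ring_nf

private lemma fq_hasDerivAt {q : ℝ} (h1 : (0:ℝ) < 1 - q) (h2 : (0:ℝ) < 2 - q) :
    HasDerivAt fq (Real.log 2 - Real.log (2 - q) + Real.log (1 - q)) q := by
  have hg2 : HasDerivAt (fun x : ℝ => (2 - x) * Real.log (2 - x))
      ((Real.log (2 - q) + 1) * (-1)) q := by
    have hs : HasDerivAt (fun x : ℝ => 2 - x) (-1) q := by
      simpa using (hasDerivAt_id q).const_sub 2
    exact (Real.hasDerivAt_mul_log h2.ne').comp q hs
  have hg1 : HasDerivAt (fun x : ℝ => (1 - x) * Real.log (1 - x))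
      ((Real.log (1 - q) + 1) * (-1)) q := by
    have hs : HasDerivAt (fun x : ℝ => 1 - x) (-1) q := by
      simpa using (hasDerivAt_id q).const_sub 1
    exact (Real.hasDerivAt_mul_log h1.ne').comp q hs
  have hl : HasDerivAt (fun x : ℝ => (x - 2) * Real.log 2) (Real.log 2) q := by
    simpa using ((hasDerivAt_id q).sub (hasDerivAt_const q 2)).mul_const (Real.log 2)
  have := (hl.add hg2).sub hg1
  exact this.congr_deriv (by ring)

private lemma cq_hasDerivAt {q : ℝ} (hq : q < 1) :
    HasDerivAt cq (Real.exp (fq q) *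
      (Real.log 2 - Real.log (2 - q) + Real.log (1 - q))) q := by
  have h1 : (0:ℝ) < 1 - q := by linarith
  have h2 : (0:ℝ) < 2 - q := by linarith
  have h := ((fq_hasDerivAt h1 h2).exp)
  refine h.congr_of_eventuallyEq ?_
  filter_upwards [Iio_mem_nhds hq] with x hx
  exact cq_eq_exp hx

theorem cq_antitone_value_and_limit :
    AntitoneOn cq (Set.Ico (0 : ℝ) 1) ∧ cq 0 = 1 ∧
      Tendsto cq (nhdsWithin 1 (Set.Iio (1 : ℝ))) (nhds (1 / 2)) := by
  refine ⟨?_, ?_, ?_⟩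
  · apply antitoneOn_of_deriv_nonpos (convex_Ico 0 1)
    · apply ContinuousOn.congr (Real.continuous_exp.comp fq_continuous).continuousOn
      intro x hx
      exact cq_eq_exp hx.2
    · rw [interior_Ico]
      intro x hx
      exact (cq_hasDerivAt hx.2).differentiableAt.differentiableWithinAt
    · rw [interior_Ico]
      intro x hx
      obtain ⟨hx0, hx1⟩ := hx
      rw [(cq_hasDerivAt hx1).deriv]
      have h1 : (0:ℝ) < 1 - x := by linarith
      have hle : Real.log 2 + Real.log (1 - x) ≤ Real.log (2 - x) := by
        rw [← Real.log_mul (by norm_num) h1.ne']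
        exact Real.log_le_log (by nlinarith) (by nlinarith)
      have : Real.log 2 - Real.log (2 - x) + Real.log (1 - x) ≤ 0 := by linarith
      exact mul_nonpos_of_nonneg_of_nonpos (Real.exp_pos _).le this
  · unfold cq
    norm_num
  · have hlim : Tendsto (fun q => Real.exp (fq q)) (nhdsWithin 1 (Set.Iio (1:ℝ)))
        (nhds (Real.exp (fq 1))) :=
      ((Real.continuous_exp.comp fq_continuous).tendsto 1).mono_left nhdsWithin_le_nhds
    have hfq1 : Real.exp (fq 1) = 1 / 2 := by
      unfold fq
      norm_num
      rw [Real.exp_neg, Real.exp_log (by norm_num)]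
      norm_num
    rw [← hfq1]
    refine hlim.congr' ?_
    filter_upwards [self_mem_nhdsWithin] with x hx
    exact (cq_eq_exp hx).symm
end
end

section
/- For every n ∈ ℕ with n ≥ 1, the n-degree garotte-shrinkage rule ϱⁿ(x, α) = x^{2n+1}/(x^{2n} + α^{2n}) is a shrinkage rule with exponent ρ = 2n and constants C₁ = 1, C₂ = 1, D = 1: for all α ≥ 0 and x ∈ ℝ (with ϱⁿ(0,0) = 0), |x − ϱⁿ(x, α)| ≤ min(|x|, α), and for all α > 0 and |x| ≤ α, |ϱⁿ(x, α)| ≤ |x|·(|x|/α)^{2n}. -/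
noncomputable section

/-- The `n`-degree garotte-shrinkage rule `ϱⁿ(x, α) = x^(2n+1)/(x^(2n) + α^(2n))`
(with the Lean convention `0/0 = 0`, so `ϱⁿ(0, 0) = 0`). -/
def nGarotte (n : ℕ) (x α : ℝ) : ℝ := x ^ (2 * n + 1) / (x ^ (2 * n) + α ^ (2 * n))

theorem nGarotte_is_shrinkage_rule (n : ℕ) (hn : 1 ≤ n) :
    -- shrinkage rule with exponent ρ = 2n and constants C₁ = 1, C₂ = 1, D = 1:
    (∀ α : ℝ, 0 ≤ α → ∀ x : ℝ, |x - nGarotte n x α| ≤ min |x| α) ∧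
    (∀ α : ℝ, 0 < α → ∀ x : ℝ, |x| ≤ α → |nGarotte n x α| ≤ |x| * (|x| / α) ^ (2 * n)) := by
  have h2n : 0 < 2 * n := by omega
  constructor
  · intro α hα x
    have hxe : (0:ℝ) ≤ x ^ (2 * n) := (even_two_mul n).pow_nonneg x
    have hae : (0:ℝ) ≤ α ^ (2 * n) := (even_two_mul n).pow_nonneg α
    by_cases hd : x ^ (2 * n) + α ^ (2 * n) = 0
    · have hx0 : x ^ (2 * n) = 0 := by nlinarith
      have ha0 : α ^ (2 * n) = 0 := by nlinarith
      have hx : x = 0 := pow_eq_zero_iff (by omega) |>.mp hx0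
      have ha : α = 0 := pow_eq_zero_iff (by omega) |>.mp ha0
      simp [nGarotte, hx, ha]
    · have hdpos : 0 < x ^ (2 * n) + α ^ (2 * n) := lt_of_le_of_ne (by linarith) (Ne.symm hd)
      have key : x - nGarotte n x α = x * α ^ (2 * n) / (x ^ (2 * n) + α ^ (2 * n)) := by
        unfold nGarotte
        field_simp
        ring
      rw [key, abs_div, abs_mul, abs_of_pos hdpos, abs_of_nonneg hae]
      refine le_min ?_ ?_
      · rw [div_le_iff₀ hdpos]
        nlinarith [abs_nonneg x]
      · rw [div_le_iff₀ hdpos]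
        rcases le_total |x| α with h | h
        · have : |x| * α ^ (2 * n) ≤ α * α ^ (2 * n) := by nlinarith
          nlinarith
        · -- α ≤ |x|
          obtain ⟨m, hm⟩ : ∃ m, 2 * n = m + 1 := ⟨2 * n - 1, by omega⟩
          have hpm : α ^ m ≤ |x| ^ m := pow_le_pow_left₀ hα h m
          have hx2 : x ^ (2 * n) = |x| ^ (2 * n) := by
            rw [← abs_pow, abs_of_nonneg hxe]
          have : |x| * α ^ (2 * n) ≤ α * x ^ (2 * n) := by
            rw [hm] at hx2
            rw [hm, hx2, pow_succ, pow_succ]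
            have h1 : α ^ m * α ≤ |x| ^ m * α := by nlinarith
            have h2 : |x| * (α ^ m * α) ≤ α * (|x| ^ m * |x|) := by nlinarith [abs_nonneg x, pow_nonneg (abs_nonneg x) m]
            linarith
          nlinarith [mul_nonneg hα hae]
  · intro α hα x hx
    have hxe : (0:ℝ) ≤ x ^ (2 * n) := (even_two_mul n).pow_nonneg x
    have hapos : (0:ℝ) < α ^ (2 * n) := pow_pos hα _
    have hdpos : 0 < x ^ (2 * n) + α ^ (2 * n) := by linarith
    have hx2 : x ^ (2 * n) = |x| ^ (2 * n) := by rw [← abs_pow, abs_of_nonneg hxe]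
    have : |nGarotte n x α| = |x| ^ (2 * n + 1) / (x ^ (2 * n) + α ^ (2 * n)) := by
      rw [nGarotte, abs_div, abs_of_pos hdpos, abs_pow]
    rw [this, div_pow, mul_div_assoc', ← pow_succ']
    rw [div_le_div_iff₀ hdpos (pow_pos hα _)]
    have h1 : |x| ^ (2 * n + 1) * α ^ (2 * n) ≤ |x| ^ (2 * n + 1) * (x ^ (2 * n) + α ^ (2 * n)) := by
      have := pow_nonneg (abs_nonneg x) (2 * n + 1)
      nlinarith
    calc |x| ^ (2 * n + 1) * α ^ (2 * n) ≤ |x| ^ (2 * n + 1) * (x ^ (2 * n) + α ^ (2 * n)) := h1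
      _ = |x| ^ (2 * n + 1) * (x ^ (2 * n) + α ^ (2 * n)) := rfl
end
end
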